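/- arXiv:1909.07425 — 3 statements merged into one kernel-verified Lean document; each statement's English description precedes it below -/
import Mathlib

section
/- (Theorem 1, continuity.) If the local Lipschitz assumption holds at every θ ∈ Θ (with neighborhood U_θ and integrable L_θ possibly depending on θ), then the function D(θ) = sup_{φ∈Φ, η∈Π} CFD²_{ω_η}((f_φ)_*P, (z ↦ f_φ(g(θ,z)))_*ζ) is continuous on Θ. -/
open MeasureTheory Filter Topology
open scoped NNReal

/-- Characteristic function of a measure on Euclidean space. -/
noncomputable def charFn {m : ℕ} (μ : Measure (EuclideanSpace ℝ (Fin m)))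
    (t : EuclideanSpace ℝ (Fin m)) : ℂ :=
  ∫ x, Complex.exp (Complex.I * ((inner ℝ t x : ℝ) : ℂ)) ∂μ

/-- Squared characteristic function distance between `μ` and `ν` with weighting measure `ω`. -/
noncomputable def CFD2 {m : ℕ} (ω μ ν : Measure (EuclideanSpace ℝ (Fin m))) : ℝ :=
  ∫ t, ‖charFn μ t - charFn ν t‖ ^ 2 ∂ω
section Aux

lemma aexp_sub_one (c : ℝ) :
    ‖ Complex.exp (Complex.I * c) - 1‖ ≤ |c| := by
  have h2 : ‖ Complex.exp (Complex.I * c) - 1‖ ^ 2 ≤ |c| ^ 2 := by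
    have he : Complex.exp (Complex.I * c)
        = ((Real.cos c : ℝ) : ℂ) + ((Real.sin c : ℝ) : ℂ) * Complex.I := by
      rw [mul_comm, Complex.exp_mul_I]
      simp [Complex.ofReal_cos, Complex.ofReal_sin]
    rw [he]
    have : ((Real.cos c : ℝ) : ℂ) + ((Real.sin c : ℝ) : ℂ) * Complex.I - 1
        = ((Real.cos c - 1 : ℝ) : ℂ) + ((Real.sin c : ℝ) : ℂ) * Complex.I := by
      push_cast; ring
    rw [this, Complex.sq_norm, Complex.normSq_add_mul_I]
    have hc : Real.cos c = 2 * Real.cos (c/2) ^ 2 - 1 := by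
      have := Real.cos_two_mul (c/2)
      rw [show 2 * (c/2) = c by ring] at this
      linarith
    have hs : Real.sin (c/2) ^ 2 + Real.cos (c/2) ^ 2 = 1 := Real.sin_sq_add_cos_sq _
    have hb : Real.sin (c/2) ^ 2 ≤ (c/2) ^ 2 := by
      have := Real.abs_sin_le_abs (x := c/2)
      nlinarith [abs_nonneg (Real.sin (c/2)), sq_abs (Real.sin (c/2)), sq_abs (c/2)]
    have hcs : Real.sin c ^ 2 + Real.cos c ^ 2 = 1 := Real.sin_sq_add_cos_sq _
    rw [sq_abs]
    nlinarith
  nlinarith [abs_nonneg c, norm_nonneg (Complex.exp (Complex.I * c) - 1)]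

lemma aexp_sub (a b : ℝ) :
    ‖ Complex.exp (Complex.I * a) - Complex.exp (Complex.I * b)‖ ≤ |a - b| := by
  have h : Complex.exp (Complex.I * a) - Complex.exp (Complex.I * b)
      = Complex.exp (Complex.I * b) * (Complex.exp (Complex.I * ((a - b : ℝ) : ℂ)) - 1) := by
    rw [mul_sub, ← Complex.exp_add]
    push_cast
    ring_nf
  rw [h, norm_mul]
  have h1 : ‖ Complex.exp (Complex.I * b)‖ = 1 := by
    rw [Complex.norm_exp]
    simp
  rw [h1, one_mul]
  exact aexp_sub_one (a - b)

variable {m : ℕ}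

lemma meas_exp_inner (t : EuclideanSpace ℝ (Fin m)) :
    Measurable (fun x : EuclideanSpace ℝ (Fin m) =>
      Complex.exp (Complex.I * ((inner ℝ t x : ℝ) : ℂ))) := by
  apply Complex.measurable_exp.comp
  exact (measurable_const.mul
    (Complex.measurable_ofReal.comp
      ((continuous_const.inner continuous_id).measurable)))

lemma norm_exp_inner (t x : EuclideanSpace ℝ (Fin m)) :
    ‖Complex.exp (Complex.I * ((inner ℝ t x : ℝ) : ℂ))‖ = 1 := by
  rw [Complex.norm_exp]
  simp

lemma charFn_abs_le (μ : Measure (EuclideanSpace ℝ (Fin m))) [IsProbabilityMeasure μ]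
    (t : EuclideanSpace ℝ (Fin m)) : ‖ charFn μ t‖ ≤ 1 := by
  rw [charFn]
  calc ‖∫ x, Complex.exp (Complex.I * ((inner ℝ t x : ℝ) : ℂ)) ∂μ‖
      ≤ ∫ x, ‖Complex.exp (Complex.I * ((inner ℝ t x : ℝ) : ℂ))‖ ∂μ :=
        norm_integral_le_integral_norm _
    _ = ∫ _x, (1:ℝ) ∂μ := by simp only [norm_exp_inner]
    _ = 1 := by simp

lemma charFn_cont (μ : Measure (EuclideanSpace ℝ (Fin m))) [IsFiniteMeasure μ] :
    Continuous (charFn μ) := by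
  apply continuous_of_dominated
    (F := fun t x => Complex.exp (Complex.I * ((inner ℝ t x : ℝ) : ℂ)))
    (bound := fun _ => (1:ℝ))
  · exact fun t => (meas_exp_inner t).aestronglyMeasurable
  · intro t
    filter_upwards with x
    rw [norm_exp_inner]
  · exact integrable_const 1
  · filter_upwards with x
    exact Complex.continuous_exp.comp
      (continuous_const.mul (Complex.continuous_ofReal.comp
        (continuous_id.inner continuous_const)))

lemma charFn_map {Z : Type*} [MeasurableSpace Z] (ζ : Measure Z)
    {h : Z → EuclideanSpace ℝ (Fin m)} (hh : Measurable h)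
    (t : EuclideanSpace ℝ (Fin m)) :
    charFn (ζ.map h) t = ∫ z, Complex.exp (Complex.I * ((inner ℝ t (h z) : ℝ) : ℂ)) ∂ζ := by
  rw [charFn, integral_map hh.aemeasurable (meas_exp_inner t).aestronglyMeasurable]

lemma exp_inner_comp_integrable {Z : Type*} [MeasurableSpace Z] (ζ : Measure Z)
    [IsProbabilityMeasure ζ] {h : Z → EuclideanSpace ℝ (Fin m)} (hh : Measurable h)
    (t : EuclideanSpace ℝ (Fin m)) :
    Integrable (fun z => Complex.exp (Complex.I * ((inner ℝ t (h z) : ℝ) : ℂ))) ζ := by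
  apply Integrable.mono' (integrable_const (1:ℝ))
    (((meas_exp_inner t).comp hh).aestronglyMeasurable)
  filter_upwards with z
  simp only [Function.comp_apply]
  rw [norm_exp_inner]

lemma charFn_map_diff {Z : Type*} [MeasurableSpace Z] (ζ : Measure Z)
    [IsProbabilityMeasure ζ] {h h' : Z → EuclideanSpace ℝ (Fin m)}
    (hh : Measurable h) (hh' : Measurable h') {B : Z → ℝ}
    (hBint : Integrable B ζ) (hbd : ∀ z, ‖h' z - h z‖ ≤ B z)
    (t : EuclideanSpace ℝ (Fin m)) :
    ‖ charFn (ζ.map h') t - charFn (ζ.map h) t‖ ≤ ‖t‖ * ∫ z, B z ∂ζ := by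
  rw [charFn_map ζ hh' t, charFn_map ζ hh t,
    ← integral_sub (exp_inner_comp_integrable ζ hh' t) (exp_inner_comp_integrable ζ hh t)]
  calc ‖∫ z, (Complex.exp (Complex.I * ((inner ℝ t (h' z) : ℝ) : ℂ))
        - Complex.exp (Complex.I * ((inner ℝ t (h z) : ℝ) : ℂ))) ∂ζ‖
      ≤ ∫ z, ‖Complex.exp (Complex.I * ((inner ℝ t (h' z) : ℝ) : ℂ))
        - Complex.exp (Complex.I * ((inner ℝ t (h z) : ℝ) : ℂ))‖ ∂ζ :=
        norm_integral_le_integral_norm _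
    _ ≤ ∫ z, ‖t‖ * B z ∂ζ := by
        apply integral_mono_of_nonneg
        · filter_upwards with z; positivity
        · exact hBint.const_mul _
        · filter_upwards with z
          calc ‖ Complex.exp (Complex.I * ((inner ℝ t (h' z) : ℝ) : ℂ))
                - Complex.exp (Complex.I * ((inner ℝ t (h z) : ℝ) : ℂ))‖
              ≤ |(inner ℝ t (h' z) : ℝ) - (inner ℝ t (h z) : ℝ)| := aexp_sub _ _
            _ = |(inner ℝ t (h' z - h z) : ℝ)| := by rw [inner_sub_right]
            _ ≤ ‖t‖ * ‖h' z - h z‖ := abs_real_inner_le_norm _ _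
            _ ≤ ‖t‖ * B z := by
                exact mul_le_mul_of_nonneg_left (hbd z) (norm_nonneg _)
    _ = ‖t‖ * ∫ z, B z ∂ζ := integral_const_mul _ _

lemma cfd2_integrand_integrable (ω μ ν : Measure (EuclideanSpace ℝ (Fin m)))
    [IsFiniteMeasure ω] [IsProbabilityMeasure μ] [IsProbabilityMeasure ν] :
    Integrable (fun t => ‖ charFn μ t - charFn ν t‖ ^ 2) ω := by
  apply Integrable.mono' (integrable_const (4:ℝ))
  · exact (((continuous_norm.comp
      ((charFn_cont μ).sub (charFn_cont ν))).pow 2)).aestronglyMeasurable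
  · filter_upwards with t
    have h1 := charFn_abs_le μ t
    have h2 := charFn_abs_le ν t
    have h3 : ‖ charFn μ t - charFn ν t‖ ≤ 2 := by
      calc ‖ charFn μ t - charFn ν t‖
          ≤ ‖ charFn μ t‖ + ‖ charFn ν t‖ :=
            norm_sub_le _ _
        _ ≤ 2 := by linarith
    have h0 : (0:ℝ) ≤ ‖ charFn μ t - charFn ν t‖ := norm_nonneg _
    rw [Real.norm_eq_abs, abs_of_nonneg (by positivity)]
    nlinarith

lemma CFD2_le_four (ω μ ν : Measure (EuclideanSpace ℝ (Fin m)))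
    [IsProbabilityMeasure ω] [IsProbabilityMeasure μ] [IsProbabilityMeasure ν] :
    CFD2 ω μ ν ≤ 4 := by
  rw [CFD2]
  calc ∫ t, ‖ charFn μ t - charFn ν t‖ ^ 2 ∂ω
      ≤ ∫ _t, (4:ℝ) ∂ω := by
        apply integral_mono_of_nonneg
        · filter_upwards with t; positivity
        · exact integrable_const 4
        · filter_upwards with t
          have h1 := charFn_abs_le μ t
          have h2 := charFn_abs_le ν t
          have h3 : ‖ charFn μ t - charFn ν t‖ ≤ 2 := by
            calc ‖ charFn μ t - charFn ν t‖
                ≤ ‖ charFn μ t‖ + ‖ charFn ν t‖ :=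
                  norm_sub_le _ _
              _ ≤ 2 := by linarith
          have h0 : (0:ℝ) ≤ ‖ charFn μ t - charFn ν t‖ := norm_nonneg _
          nlinarith
    _ = 4 := by simp

lemma CFD2_le_of_charFn_close (ω μ ν ν' : Measure (EuclideanSpace ℝ (Fin m)))
    [IsProbabilityMeasure ω] [IsProbabilityMeasure μ] [IsProbabilityMeasure ν]
    [IsProbabilityMeasure ν'] (K : ℝ) (hK : 0 ≤ K)
    (hωint : Integrable (fun t : EuclideanSpace ℝ (Fin m) => ‖t‖) ω)
    (hdif : ∀ t, ‖ charFn ν' t - charFn ν t‖ ≤ ‖t‖ * K) :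
    CFD2 ω μ ν' ≤ CFD2 ω μ ν + 4 * K * ∫ t, ‖t‖ ∂ω := by
  rw [CFD2, CFD2]
  have hintν := cfd2_integrand_integrable ω μ ν
  have hle : ∀ t, ‖ charFn μ t - charFn ν' t‖ ^ 2
      ≤ ‖ charFn μ t - charFn ν t‖ ^ 2 + 4 * (‖t‖ * K) := by
    intro t
    set u := ‖ charFn μ t - charFn ν' t‖ with hu
    set v := ‖ charFn μ t - charFn ν t‖ with hv
    have hu0 : 0 ≤ u := norm_nonneg _
    have hv0 : 0 ≤ v := norm_nonneg _
    have hu2 : u ≤ 2 := by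
      calc u ≤ ‖ charFn μ t‖ + ‖ charFn ν' t‖ :=
            norm_sub_le _ _
        _ ≤ 2 := by have := charFn_abs_le μ t; have := charFn_abs_le ν' t; linarith
    have hv2 : v ≤ 2 := by
      calc v ≤ ‖ charFn μ t‖ + ‖ charFn ν t‖ :=
            norm_sub_le _ _
        _ ≤ 2 := by have := charFn_abs_le μ t; have := charFn_abs_le ν t; linarith
    have huv : u ≤ v + ‖t‖ * K := by
      have h1 : u - v ≤ ‖(charFn μ t - charFn ν' t) - (charFn μ t - charFn ν t)‖ := by
        simpa [hu, hv] using
          norm_sub_norm_le (charFn μ t - charFn ν' t) (charFn μ t - charFn ν t)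
      have heq : (charFn μ t - charFn ν' t) - (charFn μ t - charFn ν t)
          = -(charFn ν' t - charFn ν t) := by ring
      rw [heq, norm_neg] at h1
      have h2 := hdif t
      linarith
    have hw0 : 0 ≤ ‖t‖ * K := mul_nonneg (norm_nonneg _) hK
    nlinarith [mul_nonneg (add_nonneg hu0 hv0) (by linarith : (0:ℝ) ≤ v + ‖t‖ * K - u),
      mul_nonneg hw0 (by linarith : (0:ℝ) ≤ 4 - (u + v))]
  calc ∫ t, ‖ charFn μ t - charFn ν' t‖ ^ 2 ∂ω
      ≤ ∫ t, (‖ charFn μ t - charFn ν t‖ ^ 2 + 4 * (‖t‖ * K)) ∂ω := by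
        apply integral_mono_of_nonneg
        · filter_upwards with t; positivity
        · exact hintν.add (((hωint.mul_const K).const_mul 4))
        · filter_upwards with t; exact hle t
    _ = (∫ t, ‖ charFn μ t - charFn ν t‖ ^ 2 ∂ω) + 4 * K * ∫ t, ‖t‖ ∂ω := by
        rw [integral_add hintν ((hωint.mul_const K).const_mul 4)]
        congr 1
        rw [show (fun t : EuclideanSpace ℝ (Fin m) => 4 * (‖t‖ * K))
            = fun t => (4 * K) * ‖t‖ by ext t; ring, integral_const_mul]

end Aux

/-- Theorem 1, continuity: if the local Lipschitz assumption holds at every θ,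
then `D θ = sup_{φ,η} CFD²_{ω_η}((f_φ)_*P, (z ↦ f_φ(g(θ,z)))_*ζ)` is continuous on Θ. -/
theorem cfd_sup_continuous
    {Θ : Type*} [NormedAddCommGroup Θ] [NormedSpace ℝ Θ]
    {Z : Type*} [MeasurableSpace Z] (ζ : Measure Z) [IsProbabilityMeasure ζ]
    {d m : ℕ} (P : Measure (EuclideanSpace ℝ (Fin d))) [IsProbabilityMeasure P]
    {Φ W : Type*} [Nonempty Φ] [Nonempty W]
    (f : Φ → EuclideanSpace ℝ (Fin d) → EuclideanSpace ℝ (Fin m))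
    (hf : ∀ φ, Measurable (f φ))
    (g : Θ → Z → EuclideanSpace ℝ (Fin d))
    (hg : ∀ θ, Measurable (g θ))
    (ω : W → Measure (EuclideanSpace ℝ (Fin m)))
    (hω : ∀ η, IsProbabilityMeasure (ω η))
    (T : ℝ)
    (hTint : ∀ η, Integrable (fun t => ‖t‖) (ω η))
    (hT : ∀ η, (∫ t, ‖t‖ ∂(ω η)) ≤ T)
    (hLL : ∀ θ : Θ, ∃ U : Set Θ, IsOpen U ∧ θ ∈ U ∧ ∃ L : Z → ℝ,
      Measurable L ∧ (∀ z, 0 ≤ L z) ∧ Integrable L ζ ∧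
      ∀ θ' ∈ U, ∀ z : Z, ∀ φ : Φ,
        ‖f φ (g θ' z) - f φ (g θ z)‖ ≤ L z * ‖θ' - θ‖) :
    Continuous (fun θ : Θ => ⨆ p : Φ × W,
      CFD2 (ω p.2) (P.map (f p.1)) (ζ.map (fun z => f p.1 (g θ z)))) := by
  -- basic instances
  haveI hPmap : ∀ φ : Φ, IsProbabilityMeasure (P.map (f φ)) :=
    fun φ => Measure.isProbabilityMeasure_map (hf φ).aemeasurable
  have hmeasfg : ∀ (φ : Φ) (θ : Θ), Measurable (fun z => f φ (g θ z)) :=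
    fun φ θ => (hf φ).comp (hg θ)
  haveI hζmap : ∀ (φ : Φ) (θ : Θ),
      IsProbabilityMeasure (ζ.map (fun z => f φ (g θ z))) :=
    fun φ θ => Measure.isProbabilityMeasure_map (hmeasfg φ θ).aemeasurable
  haveI := hω
  set A : Φ × W → Θ → ℝ := fun p θ =>
    CFD2 (ω p.2) (P.map (f p.1)) (ζ.map (fun z => f p.1 (g θ z))) with hA
  have hT0 : 0 ≤ T := by
    obtain ⟨η⟩ := (inferInstance : Nonempty W)
    exact le_trans (integral_nonneg fun t => norm_nonneg t) (hT η)
  have hbdd : ∀ θ : Θ, BddAbove (Set.range fun p : Φ × W => A p θ) := by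
    intro θ
    refine ⟨4, ?_⟩
    rintro x ⟨p, rfl⟩
    haveI := hω p.2
    exact CFD2_le_four _ _ _
  rw [continuous_iff_continuousAt]
  intro θ
  obtain ⟨U, hUopen, hθU, L, hLmeas, hL0, hLint, hLip⟩ := hLL θ
  obtain ⟨r, hr, hball⟩ := Metric.isOpen_iff.mp hUopen θ hθU
  have hIL : 0 ≤ ∫ z, L z ∂ζ := integral_nonneg hL0
  set C : ℝ := 4 * (∫ z, L z ∂ζ) * T with hC
  apply continuousAt_of_locally_lipschitz hr C
  intro y hy
  have hyU : y ∈ U := hball hy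
  -- the key one-sided estimates
  have key : ∀ p : Φ × W, ∀ θ₁ θ₂ : Θ,
      (∀ z, ‖f p.1 (g θ₁ z) - f p.1 (g θ₂ z)‖ ≤ L z * ‖y - θ‖) →
      A p θ₁ ≤ A p θ₂ + C * ‖y - θ‖ := by
    rintro ⟨φ, η⟩ θ₁ θ₂ hbd
    haveI := hω η
    have hKnn : 0 ≤ (∫ z, L z ∂ζ) * ‖y - θ‖ := mul_nonneg hIL (norm_nonneg _)
    have hdif : ∀ t, ‖
        charFn (ζ.map (fun z => f φ (g θ₁ z))) t
          - charFn (ζ.map (fun z => f φ (g θ₂ z))) t‖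
        ≤ ‖t‖ * ((∫ z, L z ∂ζ) * ‖y - θ‖) := by
      intro t
      have := charFn_map_diff ζ (hmeasfg φ θ₂) (hmeasfg φ θ₁)
        (B := fun z => L z * ‖y - θ‖) (hLint.mul_const _) hbd t
      calc ‖ charFn (ζ.map (fun z => f φ (g θ₁ z))) t
            - charFn (ζ.map (fun z => f φ (g θ₂ z))) t‖
          ≤ ‖t‖ * ∫ z, L z * ‖y - θ‖ ∂ζ := this
        _ = ‖t‖ * ((∫ z, L z ∂ζ) * ‖y - θ‖) := by
            rw [integral_mul_const]
    have h1 := CFD2_le_of_charFn_close (ω η) (P.map (f φ))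
      (ζ.map (fun z => f φ (g θ₂ z))) (ζ.map (fun z => f φ (g θ₁ z)))
      ((∫ z, L z ∂ζ) * ‖y - θ‖) hKnn (hTint η) hdif
    have h2 : 4 * ((∫ z, L z ∂ζ) * ‖y - θ‖) * ∫ t, ‖t‖ ∂(ω η)
        ≤ C * ‖y - θ‖ := by
      have := hT η
      calc 4 * ((∫ z, L z ∂ζ) * ‖y - θ‖) * ∫ t, ‖t‖ ∂(ω η)
          ≤ 4 * ((∫ z, L z ∂ζ) * ‖y - θ‖) * T := by
            apply mul_le_mul_of_nonneg_left this
            positivity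
        _ = C * ‖y - θ‖ := by rw [hC]; ring
    simp only [hA]
    linarith
  have est1 : ∀ p : Φ × W, A p y ≤ A p θ + C * ‖y - θ‖ := by
    intro p
    exact key p y θ (fun z => hLip y hyU z p.1)
  have est2 : ∀ p : Φ × W, A p θ ≤ A p y + C * ‖y - θ‖ := by
    intro p
    apply key p θ y
    intro z
    rw [norm_sub_rev]
    exact hLip y hyU z p.1
  have hS1 : (⨆ p, A p y) ≤ (⨆ p, A p θ) + C * ‖y - θ‖ := by
    apply ciSup_le
    intro p
    exact le_trans (est1 p) (add_le_add_left (le_ciSup (hbdd θ) p) _)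
  have hS2 : (⨆ p, A p θ) ≤ (⨆ p, A p y) + C * ‖y - θ‖ := by
    apply ciSup_le
    intro p
    exact le_trans (est2 p) (add_le_add_left (le_ciSup (hbdd y) p) _)
  rw [Real.dist_eq, dist_eq_norm]
  rw [abs_sub_le_iff]
  constructor <;> linarith
end

section
/- (Theorem 2, continuity in the weak topology.) Let P_n (n ∈ ℕ) and P be probability measures on ℝ^d, let Φ and Π be nonempty index sets, let L_f > 0, and for each φ ∈ Φ let f_φ : ℝ^d → ℝ^m be L_f-Lipschitz (with L_f not depending on φ). For each η ∈ Π let ω_η be a probability measure on ℝ^m, and assume sup_{η ∈ Π} ∫ ‖t‖ dω_η(t) < ∞. If P_n converges to P in distribution, then sup_{φ ∈ Φ, η ∈ Π} CFD²_{ω_η}((f_φ)_*P_n, (f_φ)_*P) → 0 as n → ∞. -/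
open MeasureTheory Filter Topology
open scoped NNReal

open Set Metric
open scoped ENNReal BoundedContinuousFunction

lemma lipschitzWith_cos' : LipschitzWith 1 Real.cos := by
  apply lipschitzWith_of_nnnorm_deriv_le Real.differentiable_cos
  intro x
  rw [Real.deriv_cos]
  simp only [nnnorm_neg]
  exact_mod_cast (abs_le.mpr ⟨Real.neg_one_le_sin x, Real.sin_le_one x⟩ : |Real.sin x| ≤ 1)

lemma lipschitzWith_sin' : LipschitzWith 1 Real.sin := by
  apply lipschitzWith_of_nnnorm_deriv_le Real.differentiable_sin
  intro x
  rw [Real.deriv_sin]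
  exact_mod_cast (abs_le.mpr ⟨Real.neg_one_le_cos x, Real.cos_le_one x⟩ : |Real.cos x| ≤ 1)


lemma integral_sub_le_of_lp {Ω : Type*} [MeasurableSpace Ω] [PseudoMetricSpace Ω]
    [OpensMeasurableSpace Ω]
    (μ ν : Measure Ω) [IsProbabilityMeasure μ] [IsProbabilityMeasure ν]
    (h : Ω →ᵇ ℝ) {K : ℝ≥0} (hL : LipschitzWith K ⇑h) (hb : ‖h‖ ≤ 1)
    {ε : ℝ} (hε : 0 < ε) (hLP : levyProkhorovEDist μ ν < ENNReal.ofReal ε) :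
    ∫ x, h x ∂μ - ∫ x, h x ∂ν ≤ (K + 2) * ε := by
  set g : Ω →ᵇ ℝ := h + BoundedContinuousFunction.const Ω 1 with hg
  have hgval : ∀ x, g x = h x + 1 := fun x => rfl
  have habs : ∀ x, |h x| ≤ 1 := fun x => by
    simpa [Real.norm_eq_abs] using (h.norm_coe_le_norm x).trans hb
  have g_nn : ∀ x, 0 ≤ g x := fun x => by
    have := (abs_le.mp (habs x)).1; rw [hgval]; linarith
  have g_le : ∀ x, g x ≤ 2 := fun x => by
    have := (abs_le.mp (habs x)).2; rw [hgval]; linarith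
  have g_norm : ‖g‖ ≤ 2 := by
    rw [BoundedContinuousFunction.norm_le (by norm_num)]
    intro x
    rw [Real.norm_eq_abs, abs_le]
    exact ⟨by linarith [g_nn x], g_le x⟩
  have g_lip : LipschitzWith K ⇑g := by
    intro x y
    have := hL x y
    simpa [hgval, edist_dist, Real.dist_eq, hgval] using hL x y
  set M := ‖g‖ with hM
  have hM0 : 0 ≤ M := norm_nonneg _
  set c := (K : ℝ) * ε with hc
  have hc0 : 0 ≤ c := mul_nonneg K.coe_nonneg hε.le
  set r : ℝ → ℝ := fun s => (ν {a | s ≤ g a}).toReal with hr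
  have r_anti : Antitone r := by
    intro s u hsu
    exact ENNReal.toReal_mono (measure_ne_top _ _) (measure_mono fun a ha => le_trans hsu ha)
  have r_mble : Measurable r := r_anti.measurable
  have r_nn : ∀ s, 0 ≤ r s := fun s => ENNReal.toReal_nonneg
  have r_le_one : ∀ s, r s ≤ 1 := fun s => by
    have : ν {a | s ≤ g a} ≤ 1 := prob_le_one
    simpa using ENNReal.toReal_mono ENNReal.one_ne_top this
  -- interval integrability of r
  have r_ii : ∀ a b : ℝ, IntervalIntegrable r volume a b := by
    intro a b
    rw [intervalIntegrable_iff]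
    apply Measure.integrableOn_of_bounded (M := 1) measure_Ioc_lt_top.ne
      r_mble.aestronglyMeasurable
    filter_upwards with s
    rw [Real.norm_eq_abs, abs_of_nonneg (r_nn s)]
    exact r_le_one s
  -- key: thickening bound
  have thick_sub : ∀ t : ℝ, thickening ε {a | t ≤ g a} ⊆ {a | t - c ≤ g a} := by
    intro t a ha
    rw [mem_thickening_iff] at ha
    obtain ⟨b, hb', hab⟩ := ha
    have : |g a - g b| ≤ c := by
      have h1 : dist (g a) (g b) ≤ K * dist a b := g_lip.dist_le_mul a b
      rw [Real.dist_eq] at h1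
      exact h1.trans (mul_le_mul_of_nonneg_left hab.le K.coe_nonneg)
    have := (abs_le.mp this).1
    simp only [mem_setOf_eq] at hb' ⊢
    linarith [hb']
  have key := BoundedContinuousFunction.integral_le_of_levyProkhorovEDist_lt μ ν hε hLP g
    (Eventually.of_forall g_nn)
  -- bound the thickening integral
  have step1 : (∫ t in Ioc 0 M, (ν (thickening ε {a | t ≤ g a})).toReal)
      ≤ ∫ t in Ioc 0 M, r (t - c) := by
    apply setIntegral_mono_on
    · apply Measure.integrableOn_of_bounded (M := 1) (by simp : volume (Ioc 0 M) ≠ ⊤)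
      · apply Measurable.aestronglyMeasurable
        apply Measurable.ennreal_toReal
        apply Antitone.measurable
        intro s u hsu
        exact measure_mono (thickening_subset_of_subset ε fun a ha => le_trans hsu ha)
      · filter_upwards with s
        rw [Real.norm_eq_abs, abs_of_nonneg ENNReal.toReal_nonneg]
        have : ν (thickening ε {a | s ≤ g a}) ≤ 1 := prob_le_one
        simpa using ENNReal.toReal_mono ENNReal.one_ne_top this
    · have hri := (r_ii (0 - c) (M - c)).comp_sub_right c
      simp only [sub_add_cancel] at hri
      exact (intervalIntegrable_iff.mp hri).mono_set (uIoc_of_le hM0).symm.subset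
    · exact measurableSet_Ioc
    · intro t _
      exact ENNReal.toReal_mono (measure_ne_top _ _) (measure_mono (thick_sub t))
  -- shift the integral
  have step2 : (∫ t in Ioc 0 M, r (t - c)) ≤ c + ∫ t in Ioc 0 M, r t := by
    have e1 : (∫ t in Ioc 0 M, r (t - c)) = ∫ t in (0:ℝ)..M, r (t - c) := by
      rw [intervalIntegral.integral_of_le hM0]
    rw [e1, intervalIntegral.integral_comp_sub_right r c]
    have split : ∫ t in (0 - c)..(M - c), r t
        = (∫ t in (0 - c)..(0:ℝ), r t) + ∫ t in (0:ℝ)..(M - c), r t :=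
      (intervalIntegral.integral_add_adjacent_intervals (r_ii _ _) (r_ii _ _)).symm
    rw [split]
    have b1 : (∫ t in (0 - c)..(0:ℝ), r t) ≤ c := by
      calc (∫ t in (0 - c)..(0:ℝ), r t) ≤ ∫ _ in (0 - c)..(0:ℝ), (1:ℝ) := by
            apply intervalIntegral.integral_mono_on (by linarith) (r_ii _ _)
              intervalIntegrable_const
            intro x _; exact r_le_one x
        _ = c := by rw [intervalIntegral.integral_const]; simp
    have b2 : (∫ t in (0:ℝ)..(M - c), r t) ≤ ∫ t in Ioc 0 M, r t := by
      rcases le_or_gt 0 (M - c) with hMc | hMc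
      · rw [intervalIntegral.integral_of_le hMc]
        apply setIntegral_mono_set
          ((intervalIntegrable_iff.mp (r_ii 0 M)).mono_set (uIoc_of_le hM0).symm.subset)
          (Eventually.of_forall r_nn)
          (Eventually.of_forall (fun x hx => Ioc_subset_Ioc le_rfl (by linarith) hx))
      · rw [intervalIntegral.integral_of_ge hMc.le]
        have : 0 ≤ ∫ t in Ioc 0 M, r t := setIntegral_nonneg measurableSet_Ioc fun x _ => r_nn x
        have h2 : 0 ≤ ∫ t in Ioc (M - c) 0, r t :=
          setIntegral_nonneg measurableSet_Ioc fun x _ => r_nn x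
        linarith
    linarith
  -- layer cake for g over ν
  have layer : (∫ t in Ioc 0 M, r t) = ∫ x, g x ∂ν :=
    (BoundedContinuousFunction.integral_eq_integral_meas_le g ν (Eventually.of_forall g_nn)).symm
  have chain : ∫ x, g x ∂μ ≤ (∫ x, g x ∂ν) + c + ε * M := by
    have := key.trans (by linarith [add_le_add_right (step1.trans step2) (ε * M)] :
      (∫ t in Ioc 0 M, (ν (thickening ε {a | t ≤ g a})).toReal) + ε * ‖g‖
        ≤ (c + ∫ t in Ioc 0 M, r t) + ε * M)
    rw [layer] at this
    linarith
  -- translate back to h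
  have int_h : ∀ (κ : Measure Ω), IsProbabilityMeasure κ → ∫ x, g x ∂κ = (∫ x, h x ∂κ) + 1 := by
    intro κ hκ
    simp only [hgval]
    rw [integral_add (h.integrable κ) (integrable_const 1), integral_const]
    simp
  have int_h_μ := int_h μ inferInstance
  have int_h_ν := int_h ν inferInstance
  rw [int_h_μ, int_h_ν] at chain
  have : ε * M ≤ ε * 2 := mul_le_mul_of_nonneg_left g_norm hε.le
  push_cast
  nlinarith [K.coe_nonneg, hε.le]

lemma abs_integral_sub_le_of_lp {Ω : Type*} [MeasurableSpace Ω] [PseudoMetricSpace Ω]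
    [OpensMeasurableSpace Ω]
    (μ ν : Measure Ω) [IsProbabilityMeasure μ] [IsProbabilityMeasure ν]
    (h : Ω →ᵇ ℝ) {K : ℝ≥0} (hL : LipschitzWith K ⇑h) (hb : ‖h‖ ≤ 1)
    {ε : ℝ} (hε : 0 < ε) (hLP : levyProkhorovEDist μ ν < ENNReal.ofReal ε) :
    |∫ x, h x ∂μ - ∫ x, h x ∂ν| ≤ (K + 2) * ε := by
  rw [abs_le]
  constructor
  · have := integral_sub_le_of_lp ν μ h hL hb hε (by rwa [levyProkhorovEDist_comm])
    linarith
  · exact integral_sub_le_of_lp μ ν h hL hb hε hLP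

section B
variable {d m : ℕ}

lemma exp_I_re (r : ℝ) : (Complex.exp (Complex.I * r)).re = Real.cos r := by
  rw [mul_comm, Complex.exp_mul_I]
  simp [Complex.cos_ofReal_re]

lemma exp_I_im (r : ℝ) : (Complex.exp (Complex.I * r)).im = Real.sin r := by
  rw [mul_comm, Complex.exp_mul_I]
  simp [Complex.sin_ofReal_re]

lemma exp_I_norm (r : ℝ) : ‖Complex.exp (Complex.I * r)‖ = 1 := by
  rw [mul_comm, Complex.norm_exp_ofReal_mul_I]

lemma charFn_diff_le
    (μ ν : Measure (EuclideanSpace ℝ (Fin d)))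
    [IsProbabilityMeasure μ] [IsProbabilityMeasure ν]
    (Lf : ℝ≥0) (g : EuclideanSpace ℝ (Fin d) → EuclideanSpace ℝ (Fin m))
    (hg : LipschitzWith Lf g) (t : EuclideanSpace ℝ (Fin m))
    {ε : ℝ} (hε : 0 < ε) (hLP : levyProkhorovEDist μ ν < ENNReal.ofReal ε) :
    ‖charFn (μ.map g) t - charFn (ν.map g) t‖
      ≤ 2 * ((‖t‖ * Lf + 2) * ε) := by
  set K : ℝ≥0 := ‖t‖₊ * Lf with hK
  -- inner product is Lipschitz
  have inner_lip : LipschitzWith ‖t‖₊ (fun x : EuclideanSpace ℝ (Fin m) => (inner ℝ t x : ℝ)) := by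
    apply LipschitzWith.of_dist_le_mul
    intro x y
    rw [Real.dist_eq, ← inner_sub_right]
    calc |(inner ℝ t (x - y) : ℝ)| ≤ ‖t‖ * ‖x - y‖ := abs_real_inner_le_norm t (x - y)
      _ = ↑‖t‖₊ * dist x y := by rw [coe_nnnorm, dist_eq_norm]
  have cos_lip : LipschitzWith K
      (fun x : EuclideanSpace ℝ (Fin d) => Real.cos (inner ℝ t (g x) : ℝ)) := by
    have := (lipschitzWith_cos'.comp (inner_lip.comp hg)).weaken (by rw [one_mul] : 1 * (‖t‖₊ * Lf) ≤ K)
    exact this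
  have sin_lip : LipschitzWith K
      (fun x : EuclideanSpace ℝ (Fin d) => Real.sin (inner ℝ t (g x) : ℝ)) := by
    exact (lipschitzWith_sin'.comp (inner_lip.comp hg)).weaken (by rw [one_mul])
  -- bounded continuous versions
  set cb : BoundedContinuousFunction (EuclideanSpace ℝ (Fin d)) ℝ :=
    BoundedContinuousFunction.mkOfBound
      ⟨fun x => Real.cos (inner ℝ t (g x) : ℝ), cos_lip.continuous⟩ 2
      (fun x y => by
        rw [Real.dist_eq]
        calc |Real.cos _ - Real.cos _| ≤ |Real.cos ((inner ℝ t (g x) : ℝ))| + |Real.cos ((inner ℝ t (g y) : ℝ))| :=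
              abs_sub _ _
          _ ≤ 1 + 1 := add_le_add (Real.abs_cos_le_one _) (Real.abs_cos_le_one _)
          _ = 2 := by norm_num) with hcb
  set sb : BoundedContinuousFunction (EuclideanSpace ℝ (Fin d)) ℝ :=
    BoundedContinuousFunction.mkOfBound
      ⟨fun x => Real.sin (inner ℝ t (g x) : ℝ), sin_lip.continuous⟩ 2
      (fun x y => by
        rw [Real.dist_eq]
        calc |Real.sin _ - Real.sin _| ≤ |Real.sin ((inner ℝ t (g x) : ℝ))| + |Real.sin ((inner ℝ t (g y) : ℝ))| :=
              abs_sub _ _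
          _ ≤ 1 + 1 := add_le_add (Real.abs_sin_le_one _) (Real.abs_sin_le_one _)
          _ = 2 := by norm_num) with hsb
  have cb_norm : ‖cb‖ ≤ 1 := by
    rw [BoundedContinuousFunction.norm_le zero_le_one]
    intro x
    exact (Real.abs_cos_le_one _).trans_eq' (Real.norm_eq_abs _)
  have sb_norm : ‖sb‖ ≤ 1 := by
    rw [BoundedContinuousFunction.norm_le zero_le_one]
    intro x
    exact (Real.abs_sin_le_one _).trans_eq' (Real.norm_eq_abs _)
  have hcos := abs_integral_sub_le_of_lp μ ν cb cos_lip cb_norm hε hLP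
  have hsin := abs_integral_sub_le_of_lp μ ν sb sin_lip sb_norm hε hLP
  -- rewrite charFn of mapped measures
  set F : EuclideanSpace ℝ (Fin d) → ℂ :=
    fun x => Complex.exp (Complex.I * ((inner ℝ t (g x) : ℝ) : ℂ)) with hF
  have F_cont : Continuous F := by
    apply Complex.continuous_exp.comp
    exact continuous_const.mul (Complex.continuous_ofReal.comp
      ((continuous_const.inner continuous_id).comp hg.continuous))
  have F_int : ∀ (κ : Measure (EuclideanSpace ℝ (Fin d))), IsProbabilityMeasure κ →
      Integrable F κ := by
    intro κ hκ
    apply Integrable.mono' (integrable_const 1) F_cont.aestronglyMeasurable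
    filter_upwards with x
    rw [hF]
    exact (exp_I_norm _).le
  have hmapμ : charFn (μ.map g) t = ∫ x, F x ∂μ := by
    rw [charFn]
    exact integral_map hg.continuous.measurable.aemeasurable
      (Continuous.aestronglyMeasurable (by
        apply Complex.continuous_exp.comp
        exact continuous_const.mul (Complex.continuous_ofReal.comp
          (continuous_const.inner continuous_id))))
  have hmapν : charFn (ν.map g) t = ∫ x, F x ∂ν := by
    rw [charFn]
    exact integral_map hg.continuous.measurable.aemeasurable
      (Continuous.aestronglyMeasurable (by
        apply Complex.continuous_exp.comp
        exact continuous_const.mul (Complex.continuous_ofReal.comp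
          (continuous_const.inner continuous_id))))
  rw [hmapμ, hmapν]
  have hre : ((∫ x, F x ∂μ) - ∫ x, F x ∂ν).re = (∫ x, cb x ∂μ) - ∫ x, cb x ∂ν := by
    rw [Complex.sub_re, ← RCLike.re_to_complex, ← RCLike.re_to_complex,
      ← integral_re (F_int μ inferInstance), ← integral_re (F_int ν inferInstance)]
    congr 1 <;> exact integral_congr_ae (Eventually.of_forall fun x => by
      simp only [RCLike.re_to_complex]; exact exp_I_re _)
  have him : ((∫ x, F x ∂μ) - ∫ x, F x ∂ν).im = (∫ x, sb x ∂μ) - ∫ x, sb x ∂ν := by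
    rw [Complex.sub_im, ← RCLike.im_to_complex, ← RCLike.im_to_complex,
      ← integral_im (F_int μ inferInstance), ← integral_im (F_int ν inferInstance)]
    congr 1 <;> exact integral_congr_ae (Eventually.of_forall fun x => by
      simp only [RCLike.im_to_complex]; exact exp_I_im _)
  calc ‖(∫ x, F x ∂μ) - ∫ x, F x ∂ν‖
      ≤ |((∫ x, F x ∂μ) - ∫ x, F x ∂ν).re| + |((∫ x, F x ∂μ) - ∫ x, F x ∂ν).im| :=
        Complex.norm_le_abs_re_add_abs_im _
    _ ≤ (↑K + 2) * ε + (↑K + 2) * ε := by rw [hre, him]; exact add_le_add hcos hsin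
    _ = 2 * ((‖t‖ * ↑Lf + 2) * ε) := by
        rw [hK]
        push_cast [coe_nnnorm]
        ring

lemma charFn_continuous {m : ℕ} (μ : Measure (EuclideanSpace ℝ (Fin m)))
    [IsFiniteMeasure μ] : Continuous (charFn μ) := by
  apply continuous_of_dominated (bound := fun _ => 1)
  · intro t
    apply Continuous.aestronglyMeasurable
    exact Complex.continuous_exp.comp (continuous_const.mul
      (Complex.continuous_ofReal.comp (continuous_const.inner continuous_id)))
  · intro t
    filter_upwards with x
    exact (exp_I_norm _).le
  · exact integrable_const 1
  · filter_upwards with x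
    exact Complex.continuous_exp.comp (continuous_const.mul
      (Complex.continuous_ofReal.comp ((continuous_id.inner continuous_const))))

lemma charFn_abs_le_one {m : ℕ} (μ : Measure (EuclideanSpace ℝ (Fin m)))
    [IsProbabilityMeasure μ] (t : EuclideanSpace ℝ (Fin m)) :
    ‖charFn μ t‖ ≤ 1 := by
  rw [charFn]
  calc ‖∫ x, Complex.exp (Complex.I * ((inner ℝ t x : ℝ) : ℂ)) ∂μ‖
      ≤ ∫ x, ‖Complex.exp (Complex.I * ((inner ℝ t x : ℝ) : ℂ))‖ ∂μ :=
        norm_integral_le_integral_norm _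
    _ = ∫ (_ : EuclideanSpace ℝ (Fin m)), (1:ℝ) ∂μ :=
        integral_congr_ae (Filter.Eventually.of_forall fun x => exp_I_norm _)
    _ = 1 := by simp

lemma CFD2_le_of_bound {m : ℕ} (ωm μ ν : Measure (EuclideanSpace ℝ (Fin m)))
    [IsProbabilityMeasure ωm] [IsProbabilityMeasure μ] [IsProbabilityMeasure ν]
    (hint : Integrable (fun t => ‖t‖) ωm) {T R C : ℝ}
    (hT : (∫ t, ‖t‖ ∂ωm) ≤ T) (hR : 0 < R) (hC : 0 ≤ C)
    (hBound : ∀ t : EuclideanSpace ℝ (Fin m), ‖t‖ ≤ R →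
      ‖charFn μ t - charFn ν t‖ ≤ C) :
    CFD2 ωm μ ν ≤ C ^ 2 + 4 * (T / R) := by
  set h : EuclideanSpace ℝ (Fin m) → ℝ :=
    fun t => ‖charFn μ t - charFn ν t‖ ^ 2 with hh
  have h_nn : ∀ t, 0 ≤ h t := fun t => sq_nonneg _
  have h_le4 : ∀ t, h t ≤ 4 := by
    intro t
    have : ‖charFn μ t - charFn ν t‖ ≤ 2 := by
      calc ‖charFn μ t - charFn ν t‖
          ≤ ‖charFn μ t‖ + ‖charFn ν t‖ :=
            norm_sub_le _ _
        _ ≤ 1 + 1 := add_le_add (charFn_abs_le_one μ t) (charFn_abs_le_one ν t)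
        _ = 2 := by norm_num
    calc h t ≤ 2 ^ 2 := pow_le_pow_left₀ (norm_nonneg _) this 2
      _ = 4 := by norm_num
  have h_cont : Continuous h := by
    apply Continuous.pow
    exact continuous_norm.comp ((charFn_continuous μ).sub (charFn_continuous ν))
  have h_int : Integrable h ωm := by
    apply Integrable.mono' (integrable_const 4) h_cont.aestronglyMeasurable
    filter_upwards with t
    rw [Real.norm_eq_abs, abs_of_nonneg (h_nn t)]
    exact h_le4 t
  set A : Set (EuclideanSpace ℝ (Fin m)) := {t | ‖t‖ ≤ R} with hA
  have hA_mble : MeasurableSet A := measurableSet_le measurable_norm measurable_const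
  have hsplit : CFD2 ωm μ ν = (∫ t in A, h t ∂ωm) + ∫ t in Aᶜ, h t ∂ωm :=
    (integral_add_compl hA_mble h_int).symm
  have hA_le : (∫ t in A, h t ∂ωm) ≤ C ^ 2 := by
    calc (∫ t in A, h t ∂ωm) ≤ ∫ _ in A, C ^ 2 ∂ωm := by
          apply setIntegral_mono_on h_int.integrableOn (integrableOn_const (measure_lt_top _ _).ne) hA_mble
          intro t ht
          exact pow_le_pow_left₀ (norm_nonneg _) (hBound t ht) 2
      _ = (ωm A).toReal * C ^ 2 := by rw [setIntegral_const]; rfl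
      _ ≤ 1 * C ^ 2 := by
          apply mul_le_mul_of_nonneg_right _ (sq_nonneg C)
          simpa using ENNReal.toReal_mono ENNReal.one_ne_top prob_le_one
      _ = C ^ 2 := one_mul _
  have hmarkov : (ωm Aᶜ).toReal ≤ T / R := by
    have h1 : Aᶜ ⊆ {t | R ≤ ‖t‖} := by
      intro t ht
      simp only [hA, mem_compl_iff, mem_setOf_eq, not_le] at ht
      exact le_of_lt ht
    have h2 : R * (ωm {t | R ≤ ‖t‖}).toReal ≤ ∫ t, ‖t‖ ∂ωm :=
      mul_meas_ge_le_integral_of_nonneg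
        (Filter.Eventually.of_forall fun t => norm_nonneg t) hint R
    have h3 : (ωm Aᶜ).toReal ≤ (ωm {t | R ≤ ‖t‖}).toReal :=
      ENNReal.toReal_mono (measure_ne_top _ _) (measure_mono h1)
    rw [le_div_iff₀ hR]
    calc (ωm Aᶜ).toReal * R = R * (ωm Aᶜ).toReal := mul_comm _ _
      _ ≤ R * (ωm {t | R ≤ ‖t‖}).toReal := mul_le_mul_of_nonneg_left h3 hR.le
      _ ≤ ∫ t, ‖t‖ ∂ωm := h2
      _ ≤ T := hT
  have hAc_le : (∫ t in Aᶜ, h t ∂ωm) ≤ 4 * (T / R) := by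
    calc (∫ t in Aᶜ, h t ∂ωm) ≤ ∫ _ in Aᶜ, (4:ℝ) ∂ωm := by
          apply setIntegral_mono_on h_int.integrableOn (integrableOn_const (measure_lt_top _ _).ne) hA_mble.compl
          intro t _
          exact h_le4 t
      _ = (ωm Aᶜ).toReal * 4 := by rw [setIntegral_const]; rfl
      _ ≤ (T / R) * 4 := mul_le_mul_of_nonneg_right hmarkov (by norm_num)
      _ = 4 * (T / R) := mul_comm _ _
  rw [hsplit]
  exact add_le_add hA_le hAc_le

/-- Theorem 2, continuity in the weak topology: if Pₙ → P in distribution and each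
critic f_φ is L_f-Lipschitz (uniformly in φ), and the weighting measures have uniformly bounded
first moments, then sup_{φ,η} CFD²_{ω_η}((f_φ)_*Pₙ, (f_φ)_*P) → 0. -/
theorem cfd_sup_tendsto_zero_of_tendsto_in_distribution
    {d m : ℕ}
    (P : ℕ → Measure (EuclideanSpace ℝ (Fin d)))
    (Plim : Measure (EuclideanSpace ℝ (Fin d)))
    (hP : ∀ n, IsProbabilityMeasure (P n)) (hPlim : IsProbabilityMeasure Plim)
    {Φ W : Type*} [Nonempty Φ] [Nonempty W]
    (Lf : ℝ≥0) (hLf : 0 < Lf)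
    (f : Φ → EuclideanSpace ℝ (Fin d) → EuclideanSpace ℝ (Fin m))
    (hf : ∀ φ, LipschitzWith Lf (f φ))
    (ω : W → Measure (EuclideanSpace ℝ (Fin m)))
    (hω : ∀ η, IsProbabilityMeasure (ω η))
    (T : ℝ)
    (hTint : ∀ η, Integrable (fun t => ‖t‖) (ω η))
    (hT : ∀ η, (∫ t, ‖t‖ ∂(ω η)) ≤ T)
    (hweak : ∀ g : BoundedContinuousFunction (EuclideanSpace ℝ (Fin d)) ℝ,
      Tendsto (fun n => ∫ x, g x ∂(P n)) atTop (nhds (∫ x, g x ∂Plim))) :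
    Tendsto (fun n => ⨆ p : Φ × W,
        CFD2 (ω p.2) ((P n).map (f p.1)) (Plim.map (f p.1)))
      atTop (nhds 0) := by
  haveI := hPlim
  -- Lévy-Prokhorov distance tends to zero
  have hLPsmall : ∀ ε : ℝ, 0 < ε → ∀ᶠ n in atTop,
      levyProkhorovEDist (P n) Plim < ENNReal.ofReal ε := by
    intro ε hε
    set Pn' : ℕ → ProbabilityMeasure (EuclideanSpace ℝ (Fin d)) := fun n => ⟨P n, hP n⟩
    set Pl' : ProbabilityMeasure (EuclideanSpace ℝ (Fin d)) := ⟨Plim, hPlim⟩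
    have htend : Tendsto Pn' atTop (𝓝 Pl') :=
      (ProbabilityMeasure.tendsto_iff_forall_integral_tendsto).2 (fun g => hweak g)
    have h2 : Tendsto (fun n => (LevyProkhorov.probabilityMeasureHomeomorph
        (Ω := EuclideanSpace ℝ (Fin d))) (Pn' n)) atTop
        (𝓝 ((LevyProkhorov.probabilityMeasureHomeomorph
          (Ω := EuclideanSpace ℝ (Fin d))) Pl')) :=
      ((LevyProkhorov.probabilityMeasureHomeomorph.continuous.tendsto _).comp htend)
    have h3 := Metric.tendsto_nhds.mp h2 ε hε
    filter_upwards [h3] with n hn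
    haveI := hP n
    change levyProkhorovDist (P n) Plim < ε at hn
    have hd : levyProkhorovDist (P n) Plim < ε := hn
    rw [levyProkhorovDist] at hd
    exact (ENNReal.lt_ofReal_iff_toReal_lt (levyProkhorovEDist_ne_top _ _)).2 hd
  rw [NormedAddCommGroup.tendsto_nhds_zero]
  intro δ hδ
  have T0 : 0 ≤ T :=
    le_trans (integral_nonneg fun t => norm_nonneg t) (hT (Classical.arbitrary W))
  set R : ℝ := 16 * T / δ + 1 with hR
  have hRpos : 0 < R := by positivity
  have hTR : 4 * (T / R) ≤ δ / 4 := by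
    have hδR : δ * R = 16 * T + δ := by rw [hR]; field_simp <;> ring
    have hTRle : T / R ≤ δ / 16 := by
      rw [div_le_div_iff₀ hRpos (by norm_num)]
      nlinarith
    linarith
  set B : ℝ := 2 * ((Lf : ℝ) * R + 2) with hB
  have hBpos : 0 < B := by positivity
  set ε : ℝ := Real.sqrt (δ / 4) / B with hε'
  have hεpos : 0 < ε := div_pos (Real.sqrt_pos.2 (by linarith)) hBpos
  have hC2 : (B * ε) ^ 2 ≤ δ / 4 := by
    have hBe : B * ε = Real.sqrt (δ / 4) := by rw [hε']; field_simp
    rw [hBe, Real.sq_sqrt (by linarith)]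
  filter_upwards [hLPsmall ε hεpos] with n hn
  haveI := hP n
  have hbound : ∀ p : Φ × W,
      CFD2 (ω p.2) ((P n).map (f p.1)) (Plim.map (f p.1)) ≤ δ / 2 := by
    rintro ⟨φ, η⟩
    haveI := hω η
    haveI : IsProbabilityMeasure ((P n).map (f φ)) :=
      Measure.isProbabilityMeasure_map (hf φ).continuous.measurable.aemeasurable
    haveI : IsProbabilityMeasure (Plim.map (f φ)) :=
      Measure.isProbabilityMeasure_map (hf φ).continuous.measurable.aemeasurable
    have hB' : ∀ t : EuclideanSpace ℝ (Fin m), ‖t‖ ≤ R →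
        ‖charFn ((P n).map (f φ)) t - charFn (Plim.map (f φ)) t‖ ≤ B * ε := by
      intro t ht
      calc ‖charFn ((P n).map (f φ)) t - charFn (Plim.map (f φ)) t‖
          ≤ 2 * ((‖t‖ * Lf + 2) * ε) := charFn_diff_le _ _ Lf (f φ) (hf φ) t hεpos hn
        _ ≤ B * ε := by
            rw [hB]
            have h1 : ‖t‖ * (Lf : ℝ) ≤ (Lf : ℝ) * R := by
              rw [mul_comm]
              exact mul_le_mul_of_nonneg_left ht Lf.coe_nonneg
            nlinarith [hεpos.le]
    have := CFD2_le_of_bound (ω η) ((P n).map (f φ)) (Plim.map (f φ)) (hTint η)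
      (hT η) hRpos (by positivity : (0:ℝ) ≤ B * ε) hB'
    calc CFD2 (ω η) ((P n).map (f φ)) (Plim.map (f φ))
        ≤ (B * ε) ^ 2 + 4 * (T / R) := this
      _ ≤ δ / 4 + δ / 4 := add_le_add hC2 hTR
      _ = δ / 2 := by ring
  have hSle : (⨆ p : Φ × W, CFD2 (ω p.2) ((P n).map (f p.1)) (Plim.map (f p.1))) ≤ δ / 2 :=
    ciSup_le hbound
  have hbdd : BddAbove (Set.range fun p : Φ × W =>
      CFD2 (ω p.2) ((P n).map (f p.1)) (Plim.map (f p.1))) := by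
    refine ⟨δ / 2, ?_⟩
    rintro _ ⟨p, rfl⟩
    exact hbound p
  have hSnn : 0 ≤ ⨆ p : Φ × W, CFD2 (ω p.2) ((P n).map (f p.1)) (Plim.map (f p.1)) := by
    obtain p₀ : Φ × W := Classical.arbitrary _
    refine le_trans ?_ (le_ciSup hbdd p₀)
    unfold CFD2
    exact integral_nonneg fun t => sq_nonneg _
  rw [Real.norm_eq_abs, abs_of_nonneg hSnn]
  linarith
end B
end

section
/- (Core estimate in the proof of Theorem 2.) Let μ and ν be probability measures on ℝ^d and let π be a coupling of μ and ν, i.e., a probability measure on ℝ^d × ℝ^d whose first and second marginals are μ and ν respectively. Let f : ℝ^d → ℝ^m be L-Lipschitz, and let ω be a probability measure on ℝ^m with T := ∫ ‖t‖ dω(t) < ∞. Then CFD²_ω(f_*μ, f_*ν) ≤ 2 ∫ min(2, T · L · ‖x − y‖) dπ(x, y). -/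
open MeasureTheory Filter Topology
open scoped NNReal

lemma abs_exp_I_mul_sub_one_le (x : ℝ) :
    ‖Complex.exp (Complex.I * x) - 1‖ ≤ |x| := by
  have h1 : Complex.I * x = (x : ℂ) * Complex.I := by ring
  rw [h1]
  calc ‖Complex.exp ((x:ℂ) * Complex.I) - 1‖
      = Real.sqrt ((Real.cos x - 1)^2 + Real.sin x ^ 2) := by
        rw [Complex.norm_def, Complex.normSq_apply]
        simp [Complex.exp_ofReal_mul_I_re, Complex.exp_ofReal_mul_I_im]
        ring_nf
    _ ≤ Real.sqrt (x ^ 2) := by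
        apply Real.sqrt_le_sqrt
        nlinarith [Real.sin_sq_add_cos_sq x, Real.one_sub_sq_div_two_le_cos (x := x)]
    _ = |x| := Real.sqrt_sq_eq_abs x

lemma abs_exp_I_mul_sub_exp_I_mul_le (a b : ℝ) :
    ‖Complex.exp (Complex.I * a) - Complex.exp (Complex.I * b)‖ ≤ |a - b| := by
  have h : Complex.exp (Complex.I * a) - Complex.exp (Complex.I * b)
      = Complex.exp (Complex.I * b) * (Complex.exp (Complex.I * ((a - b : ℝ) : ℂ)) - 1) := by
    rw [mul_sub, mul_one, ← Complex.exp_add]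
    push_cast
    ring_nf
  rw [h, norm_mul]
  have hb : ‖Complex.exp (Complex.I * b)‖ = 1 := by
    rw [mul_comm]
    exact Complex.norm_exp_ofReal_mul_I b
  rw [hb, one_mul]
  exact abs_exp_I_mul_sub_one_le (a - b)

/-- core estimate in the proof of Theorem 2: for a coupling π of μ and ν and an
L-Lipschitz map f, CFD²_ω(f_*μ, f_*ν) ≤ 2 ∫ min(2, T·L·‖x − y‖) dπ(x,y) where T = ∫‖t‖ dω. -/
theorem cfd_map_le_coupling
    {d m : ℕ}
    (μ ν : Measure (EuclideanSpace ℝ (Fin d)))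
    [IsProbabilityMeasure μ] [IsProbabilityMeasure ν]
    (π : Measure (EuclideanSpace ℝ (Fin d) × EuclideanSpace ℝ (Fin d)))
    [IsProbabilityMeasure π]
    (hπ₁ : π.map Prod.fst = μ) (hπ₂ : π.map Prod.snd = ν)
    (f : EuclideanSpace ℝ (Fin d) → EuclideanSpace ℝ (Fin m))
    (L : ℝ≥0) (hf : LipschitzWith L f)
    (ω : Measure (EuclideanSpace ℝ (Fin m))) [IsProbabilityMeasure ω]
    (hωint : Integrable (fun t => ‖t‖) ω) :
    CFD2 ω (μ.map f) (ν.map f)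
      ≤ 2 * ∫ p, min 2 ((∫ t, ‖t‖ ∂ω) * (L : ℝ) * ‖p.1 - p.2‖) ∂π := by
  set T : ℝ := ∫ t, ‖t‖ ∂ω with hT
  have hT0 : 0 ≤ T := integral_nonneg fun t => norm_nonneg t
  set c : EuclideanSpace ℝ (Fin d) × EuclideanSpace ℝ (Fin d) → ℝ :=
    fun p => (L : ℝ) * ‖p.1 - p.2‖ with hc
  have hc0 : ∀ p, 0 ≤ c p := fun p => mul_nonneg L.coe_nonneg (norm_nonneg _)
  have hccont : Continuous c := by
    exact continuous_const.mul ((continuous_fst.sub continuous_snd).norm)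
  -- continuity of the exponential integrand
  have hg : ∀ t : EuclideanSpace ℝ (Fin m), Continuous
      (fun x : EuclideanSpace ℝ (Fin m) =>
        Complex.exp (Complex.I * ((inner ℝ t x : ℝ) : ℂ))) := by
    intro t
    exact Complex.continuous_exp.comp (continuous_const.mul
      (Complex.continuous_ofReal.comp ((continuous_const : Continuous fun _ => t).inner
        continuous_id)))
  have hfc : Continuous f := hf.continuous
  -- rewrite charFn of pushforwards as integrals over π
  have h1 : ∀ t, charFn (μ.map f) t
      = ∫ p, Complex.exp (Complex.I * ((inner ℝ t (f p.1) : ℝ) : ℂ)) ∂π := by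
    intro t
    rw [charFn, ← hπ₁, Measure.map_map hfc.measurable measurable_fst,
      integral_map (hfc.measurable.comp measurable_fst).aemeasurable
        ((hg t).aestronglyMeasurable)]
    rfl
  have h2 : ∀ t, charFn (ν.map f) t
      = ∫ p, Complex.exp (Complex.I * ((inner ℝ t (f p.2) : ℝ) : ℂ)) ∂π := by
    intro t
    rw [charFn, ← hπ₂, Measure.map_map hfc.measurable measurable_snd,
      integral_map (hfc.measurable.comp measurable_snd).aemeasurable
        ((hg t).aestronglyMeasurable)]
    rfl
  -- integrability of the exponentials
  have hexpint : ∀ (t : EuclideanSpace ℝ (Fin m))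
      (g : EuclideanSpace ℝ (Fin d) × EuclideanSpace ℝ (Fin d) → EuclideanSpace ℝ (Fin d)),
      Continuous g → Integrable
        (fun p => Complex.exp (Complex.I * ((inner ℝ t (f (g p)) : ℝ) : ℂ))) π := by
    intro t g hgc
    refine Integrable.mono' (integrable_const 1)
      (((hg t).comp (hfc.comp hgc)).aestronglyMeasurable) ?_
    filter_upwards with p
    rw [mul_comm, Complex.norm_exp_ofReal_mul_I]
  -- integrability of min 2 (‖t‖ * c p) on the product, jointly
  have hHcont : Continuous (fun q :
      EuclideanSpace ℝ (Fin m) ×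
        (EuclideanSpace ℝ (Fin d) × EuclideanSpace ℝ (Fin d)) =>
      min 2 (‖q.1‖ * c q.2)) :=
    continuous_const.min (continuous_fst.norm.mul (hccont.comp continuous_snd))
  have hHbd : ∀ (q : EuclideanSpace ℝ (Fin m) ×
      (EuclideanSpace ℝ (Fin d) × EuclideanSpace ℝ (Fin d))),
      ‖min 2 (‖q.1‖ * c q.2)‖ ≤ 2 := by
    intro q
    rw [Real.norm_eq_abs, abs_le]
    constructor
    · have : (0:ℝ) ≤ min 2 (‖q.1‖ * c q.2) :=
        le_min (by norm_num) (mul_nonneg (norm_nonneg _) (hc0 _))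
      linarith
    · exact min_le_left _ _
  have hHint : Integrable (fun q :
      EuclideanSpace ℝ (Fin m) ×
        (EuclideanSpace ℝ (Fin d) × EuclideanSpace ℝ (Fin d)) =>
      min 2 (‖q.1‖ * c q.2)) (ω.prod π) :=
    Integrable.mono' (integrable_const 2) hHcont.aestronglyMeasurable
      (Filter.Eventually.of_forall hHbd)
  -- F t = inner integral over π
  set F : EuclideanSpace ℝ (Fin m) → ℝ :=
    fun t => ∫ p, min 2 (‖t‖ * c p) ∂π with hFdef
  have hFint : Integrable F ω := hHint.integral_prod_left
  have hF0 : ∀ t, 0 ≤ F t := fun t =>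
    integral_nonneg fun p => le_min (by norm_num) (mul_nonneg (norm_nonneg _) (hc0 _))
  have hminint : ∀ t : EuclideanSpace ℝ (Fin m),
      Integrable (fun p => min 2 (‖t‖ * c p)) π := by
    intro t
    refine Integrable.mono' (integrable_const 2)
      ((continuous_const.min (continuous_const.mul hccont)).aestronglyMeasurable) ?_
    exact Filter.Eventually.of_forall fun p => hHbd (t, p)
  have hF2 : ∀ t, F t ≤ 2 := by
    intro t
    calc F t ≤ ∫ _, (2:ℝ) ∂π :=
          integral_mono (hminint t) (integrable_const 2) fun p => min_le_left _ _
      _ = 2 := by simp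
  -- pointwise bound on charFn difference
  have hB : ∀ t, ‖charFn (μ.map f) t - charFn (ν.map f) t‖ ≤ F t := by
    intro t
    rw [h1 t, h2 t, ← integral_sub (hexpint t _ continuous_fst) (hexpint t _ continuous_snd)]
    calc ‖∫ p, (Complex.exp (Complex.I * ((inner ℝ t (f p.1) : ℝ) : ℂ))
            - Complex.exp (Complex.I * ((inner ℝ t (f p.2) : ℝ) : ℂ))) ∂π‖
        ≤ ∫ p, ‖Complex.exp (Complex.I * ((inner ℝ t (f p.1) : ℝ) : ℂ))
            - Complex.exp (Complex.I * ((inner ℝ t (f p.2) : ℝ) : ℂ))‖ ∂π :=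
          norm_integral_le_integral_norm _
      _ ≤ F t := by
          refine integral_mono (((hexpint t _ continuous_fst).sub
            (hexpint t _ continuous_snd)).norm) (hminint t) ?_
          intro p
          refine le_min ?_ ?_
          · calc ‖Complex.exp (Complex.I * ((inner ℝ t (f p.1) : ℝ) : ℂ))
                - Complex.exp (Complex.I * ((inner ℝ t (f p.2) : ℝ) : ℂ))‖
                ≤ ‖Complex.exp (Complex.I * ((inner ℝ t (f p.1) : ℝ) : ℂ))‖
                  + ‖Complex.exp (Complex.I * ((inner ℝ t (f p.2) : ℝ) : ℂ))‖ := by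
                  exact (norm_sub_le _ _)
              _ = 2 := by
                  rw [mul_comm Complex.I, mul_comm Complex.I,
                    Complex.norm_exp_ofReal_mul_I, Complex.norm_exp_ofReal_mul_I]
                  norm_num
          · calc ‖Complex.exp (Complex.I * ((inner ℝ t (f p.1) : ℝ) : ℂ))
                - Complex.exp (Complex.I * ((inner ℝ t (f p.2) : ℝ) : ℂ))‖
                ≤ |(inner ℝ t (f p.1) : ℝ) - (inner ℝ t (f p.2) : ℝ)| :=
                  abs_exp_I_mul_sub_exp_I_mul_le _ _
              _ = |(inner ℝ t (f p.1 - f p.2) : ℝ)| := by rw [inner_sub_right]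
              _ ≤ ‖t‖ * ‖f p.1 - f p.2‖ := abs_real_inner_le_norm _ _
              _ ≤ ‖t‖ * c p := by
                  refine mul_le_mul_of_nonneg_left ?_ (norm_nonneg t)
                  have := hf.dist_le_mul p.1 p.2
                  rw [dist_eq_norm, dist_eq_norm] at this
                  exact this
  -- main chain
  have step1 : CFD2 ω (μ.map f) (ν.map f) ≤ ∫ t, 2 * F t ∂ω := by
    rw [CFD2]
    refine integral_mono_of_nonneg (Filter.Eventually.of_forall fun t => ?_)
      (hFint.const_mul 2) (Filter.Eventually.of_forall fun t => ?_)
    · positivity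
    · calc ‖charFn (μ.map f) t - charFn (ν.map f) t‖ ^ 2
          = ‖charFn (μ.map f) t - charFn (ν.map f) t‖
            * ‖charFn (μ.map f) t - charFn (ν.map f) t‖ := sq _
        _ ≤ 2 * F t := by
            have h2' : ‖charFn (μ.map f) t - charFn (ν.map f) t‖ ≤ 2 :=
              (hB t).trans (hF2 t)
            exact mul_le_mul h2' (hB t) (norm_nonneg _) (by norm_num)
  have step2 : ∫ t, 2 * F t ∂ω = 2 * ∫ p, (∫ t, min 2 (‖t‖ * c p) ∂ω) ∂π := by
    rw [integral_const_mul]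
    congr 1
    exact integral_integral_swap hHint
  have step3 : ∫ p, (∫ t, min 2 (‖t‖ * c p) ∂ω) ∂π ≤ ∫ p, min 2 (T * c p) ∂π := by
    refine integral_mono (hHint.swap.integral_prod_left) ?_ ?_
    · refine Integrable.mono' (integrable_const 2)
        ((continuous_const.min (continuous_const.mul hccont)).aestronglyMeasurable) ?_
      refine Filter.Eventually.of_forall fun p => ?_
      rw [Real.norm_eq_abs, abs_le]
      refine ⟨by linarith [le_min (by norm_num : (0:ℝ) ≤ 2) (mul_nonneg hT0 (hc0 p))],
        min_le_left _ _⟩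
    · intro p
      have hint : Integrable (fun t : EuclideanSpace ℝ (Fin m) => min 2 (‖t‖ * c p)) ω := by
        refine Integrable.mono' (integrable_const 2)
          ((continuous_const.min (continuous_norm.mul continuous_const)).aestronglyMeasurable)
          (Filter.Eventually.of_forall fun t => hHbd (t, p))
      refine le_min ?_ ?_
      · calc ∫ t, min 2 (‖t‖ * c p) ∂ω ≤ ∫ _, (2:ℝ) ∂ω :=
            integral_mono hint (integrable_const 2) fun t => min_le_left _ _
          _ = 2 := by simp
      · calc ∫ t, min 2 (‖t‖ * c p) ∂ω ≤ ∫ t, ‖t‖ * c p ∂ω :=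
            integral_mono hint (hωint.mul_const _) fun t => min_le_right _ _
          _ = T * c p := by rw [integral_mul_const]
  calc CFD2 ω (μ.map f) (ν.map f)
      ≤ 2 * ∫ p, (∫ t, min 2 (‖t‖ * c p) ∂ω) ∂π := by rw [← step2]; exact step1
    _ ≤ 2 * ∫ p, min 2 (T * c p) ∂π := by linarith [step3]
    _ = 2 * ∫ p, min 2 (T * (L:ℝ) * ‖p.1 - p.2‖) ∂π := by
        congr 1
        refine integral_congr_ae (Filter.Eventually.of_forall fun p => ?_)
        simp only [hc, mul_assoc]
end
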